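/- If a, b, c are real (or complex) constants and μ ≥ 2 is an integer such that a·x·Re(z^{μ+1}) - b·Re(z^{μ+2}) = c·x^{μ+2} for all z = x+iy ∈ ℂ, then c = 0. -/

import Mathlib

/-!
Writing `x = (z + z̄) / 2` and `Re zⁿ = (zⁿ + z̄ⁿ) / 2`, the difference of the two sides is
homogeneous of degree `μ + 2` in `(z, z̄)`, so for `z ≠ 0` it equals `z ^ (μ + 2) * Q (z̄ / z)` for
an explicit polynomial `Q`. The ratios `z̄ / z` form an infinite set, so `Q = 0`. For `μ ≥ 2` the
only contribution to the coefficient of `t²` in `Q` comes from `c ((1 + t) / 2) ^ (μ + 2)`, which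
forces `c = 0`.
-/

open Polynomial Complex ComplexConjugate

noncomputable def conjRatioPoly (μ : ℕ) (a b c : ℂ) : ℂ[X] :=
  C (a / 4) * ((1 + X) * (1 + X ^ (μ + 1))) - C (b / 2) * (1 + X ^ (μ + 2))
    - C (c / 2 ^ (μ + 2)) * (1 + X) ^ (μ + 2)

theorem conjRatioPoly_eval_mul_pow (μ : ℕ) (a b c z s : ℂ) :
    z ^ (μ + 2) * (conjRatioPoly μ a b c).eval s =
      a * ((z + s * z) / 2) * ((z ^ (μ + 1) + (s * z) ^ (μ + 1)) / 2)
        - b * ((z ^ (μ + 2) + (s * z) ^ (μ + 2)) / 2) - c * ((z + s * z) / 2) ^ (μ + 2) := by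
  have hx : ((z + s * z) / 2) ^ (μ + 2) = z ^ (μ + 2) * ((1 + s) ^ (μ + 2) / 2 ^ (μ + 2)) := by
    rw [← div_pow, ← mul_pow]
    ring
  simp only [conjRatioPoly, eval_sub, eval_mul, eval_C, eval_add, eval_one, eval_X, eval_pow, hx]
  ring

theorem conjRatioPoly_eval_conj_div_self {μ : ℕ} {a b c : ℝ}
    (h : ∀ z : ℂ, a * z.re * (z ^ (μ + 1)).re - b * (z ^ (μ + 2)).re = c * z.re ^ (μ + 2))
    {z : ℂ} (hz : z ≠ 0) : (conjRatioPoly μ a b c).eval (conj z / z) = 0 := by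
  refine (mul_eq_zero.mp ?_).resolve_left (pow_ne_zero (μ + 2) hz)
  rw [conjRatioPoly_eval_mul_pow, div_mul_cancel₀ _ hz, ← map_pow, ← map_pow,
    ← re_eq_add_conj, ← re_eq_add_conj, ← re_eq_add_conj]
  exact_mod_cast sub_eq_zero.mpr (h z)

theorem Polynomial.eq_zero_of_eval_conj_div_self_eq_zero {p : ℂ[X]}
    (h : ∀ z : ℂ, z ≠ 0 → p.eval (conj z / z) = 0) : p = 0 := by
  have hne (y : ℝ) : (1 : ℂ) + y * I ≠ 0 := by simp [Complex.ext_iff]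
  refine p.eq_zero_of_infinite_isRoot (Set.Infinite.mono ?_ (Set.infinite_range_of_injective
    (f := fun y : ℝ => (1 - y * I) / (1 + y * I)) ?_))
  · rintro _ ⟨y, rfl⟩
    simpa [sub_eq_add_neg] using h _ (hne y)
  · intro y y' hyy'
    rw [div_eq_div_iff (hne y) (hne y')] at hyy'
    have him : y' - y = y - y' := by simpa [sub_eq_add_neg] using congrArg Complex.im hyy'
    linarith

theorem conjRatioPoly_coeff_two {μ : ℕ} (hμ : 2 ≤ μ) (a b c : ℂ) :
    (conjRatioPoly μ a b c).coeff 2 = -(c / 2 ^ (μ + 2) * (μ + 2).choose 2) := by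
  have h1 : (1 + X : ℂ[X]) * (1 + X ^ (μ + 1)) = 1 + X + X ^ (μ + 1) + X ^ (μ + 2) := by ring
  simp only [conjRatioPoly, h1, coeff_sub, coeff_C_mul, coeff_add, coeff_one, coeff_X,
    coeff_X_pow, coeff_one_add_X_pow]
  simp [show μ ≠ 0 by omega, show μ ≠ 1 by omega]

theorem harmonic_identity_forces_zero (μ : ℕ) (hμ : 2 ≤ μ) (a b c : ℝ)
    (h : ∀ z : ℂ, a * z.re * (z ^ (μ + 1)).re - b * (z ^ (μ + 2)).re
      = c * z.re ^ (μ + 2)) :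
    c = 0 := by
  have hQ : conjRatioPoly μ a b c = 0 :=
    eq_zero_of_eval_conj_div_self_eq_zero fun z hz => conjRatioPoly_eval_conj_div_self h hz
  have hcoeff := conjRatioPoly_coeff_two hμ (a : ℂ) b c
  rw [hQ, coeff_zero, eq_comm, neg_eq_zero] at hcoeff
  have hchoose : ((μ + 2).choose 2 : ℂ) ≠ 0 := Nat.cast_ne_zero.mpr (Nat.choose_pos (by omega)).ne'
  simpa [hchoose] using hcoeff
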